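/- The quantity D₃(n,γ) := [25n³ − 20n²(9−γ²) + 100n(4−γ²) − 16(4−γ²)²] / [5n(n−4−2γ)(n−4+2γ)(5n² − 4n(1+γ²) − 8(4−γ²))] is strictly positive whenever n > 4 + 2γ and γ ∈ (0,1). -/

import Mathlib

/-! Writing `s = 4 - γ²`, the numerator of `D₃` factors as `(5x - 4s)(5x(x - 4) + 4s)` and the
quadratic factor of the denominator equals `5x(x - 4) + 4s(x - 2)`; for `x > 4` and `0 ≤ s ≤ 4`
every factor is positive. -/

noncomputable def D₃ (x γ : ℝ) : ℝ :=
  (25*x^3 - 20*x^2*(9 - γ^2) + 100*x*(4 - γ^2) - 16*(4 - γ^2)^2) /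
    (5*x*(x - 4 - 2*γ)*(x - 4 + 2*γ) * (5*x^2 - 4*x*(1 + γ^2) - 8*(4 - γ^2)))

lemma d3_numerator_eq (x γ : ℝ) :
    25*x^3 - 20*x^2*(9 - γ^2) + 100*x*(4 - γ^2) - 16*(4 - γ^2)^2 =
      (5*x - 4*(4 - γ^2)) * (5*x*(x - 4) + 4*(4 - γ^2)) := by
  ring

lemma d3_numerator_pos {x γ : ℝ} (hx : 4 < x) (hγ : γ^2 ≤ 4) :
    0 < 25*x^3 - 20*x^2*(9 - γ^2) + 100*x*(4 - γ^2) - 16*(4 - γ^2)^2 := by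
  rw [d3_numerator_eq]
  apply mul_pos <;> nlinarith [sq_nonneg γ]

lemma d3_quadratic_pos {x γ : ℝ} (hx : 4 < x) (hγ : γ^2 ≤ 4) :
    0 < 5*x^2 - 4*x*(1 + γ^2) - 8*(4 - γ^2) := by
  have h : 5*x^2 - 4*x*(1 + γ^2) - 8*(4 - γ^2) = 5*x*(x - 4) + 4*(4 - γ^2)*(x - 2) := by ring
  rw [h]
  nlinarith [mul_nonneg (sub_nonneg.2 hγ) (by linarith : (0:ℝ) ≤ x - 2)]

lemma d3_pos {x γ : ℝ} (hγ : |γ| ≤ 2) (hx : 4 + 2*|γ| < x) : 0 < D₃ x γ := by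
  have hx4 : 4 < x := by linarith [abs_nonneg γ]
  have hγsq : γ^2 ≤ 4 := by nlinarith [sq_abs γ, abs_nonneg γ]
  have hminus : 0 < x - 4 - 2*γ := by linarith [le_abs_self γ]
  have hplus : 0 < x - 4 + 2*γ := by linarith [neg_abs_le γ]
  have hquad := d3_quadratic_pos hx4 hγsq
  exact div_pos (d3_numerator_pos hx4 hγsq) (by positivity)

theorem stmt_9 (n : ℕ) (γ : ℝ) (hγ : γ ∈ Set.Ioo (0:ℝ) 1) (hn : 4 + 2*γ < (n:ℝ)) :
    0 < (25*(n:ℝ)^3 - 20*(n:ℝ)^2*(9 - γ^2) + 100*(n:ℝ)*(4 - γ^2) - 16*(4 - γ^2)^2) /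
        (5*(n:ℝ)*((n:ℝ) - 4 - 2*γ)*((n:ℝ) - 4 + 2*γ) *
          (5*(n:ℝ)^2 - 4*(n:ℝ)*(1 + γ^2) - 8*(4 - γ^2))) := by
  obtain ⟨hγ0, hγ1⟩ := hγ
  exact d3_pos (by rw [abs_of_pos hγ0]; linarith) (by rwa [abs_of_pos hγ0])
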